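/- arXiv:2405.01152 — 2 statements merged into one kernel-verified Lean document; each statement's English description precedes it below -/
import Mathlib

section
/- Let X be an R[1]-functorially finite two-term R[1]-rigid subcategory and let Y ∈ M_X \ X be indecomposable. In the triangle Z --z--> X --x--> Y --y--> Z[1] where x is a minimal right X-approximation: (1) y factors through R[1]; (2) z is a minimal left M_X-approximation; (3) Z is indecomposable and Z ∉ X; (4) [R[1]](X, Z[1]) = 0. -/
/-!
An indecomposable `Y ∈ M_X \ X` is a summand of some cone `V^{R₀}` of `R₀ → X^{R₀}`. The composite
`X^{R₀} → V^{R₀} → Y` factors through the right `X`-approximation `x`, so `y` kills it and the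
map `V^{R₀} → Y → Z[1]` factors through `V^{R₀} → R₀[1]`; hence `y` factors through `R[1]`. Since
`M_X` is `[R[1]]`-rigid, `y ≫ φ[1] = 0` for every `φ : Z → M` with `M ∈ M_X`, so `φ` extends along
`z`. Every endomorphism of `Z` therefore extends to an endomorphism `(φ, b, c)` of the triangle;
`End Y` is local and `x` is right minimal, so if `c` is invertible then so are `b` and `φ`, and
otherwise the same holds for `𝟙 - (φ, b, c)`: `End Z` is local. Finally `y ≠ 0` as `Y ∉ X`,
which together with rigidity rules out `Z ∈ X`.
-/

open CategoryTheory CategoryTheory.Limits CategoryTheory.Pretriangulated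

universe v u w

namespace RelCT

/-- Krull–Schmidt: every object decomposes as a finite biproduct of objects with local
endomorphism rings. -/
def KrullSchmidtCat (C : Type u) [Category.{v} C] [Preadditive C] : Prop :=
  ∀ X : C, ∃ (n : ℕ) (f : Fin n → C) (p : ∀ i, X ⟶ f i) (ι : ∀ i, f i ⟶ X),
    (∀ i, ι i ≫ p i = 𝟙 (f i)) ∧ (∑ i, p i ≫ ι i) = 𝟙 X ∧
    ∀ i (φ : f i ⟶ f i), IsIso φ ∨ IsIso (𝟙 (f i) - φ)

/-- `Fac W`: objects admitting an epimorphism from an object of `W`. -/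
def FacSet {Q : Type w} [Category Q] (W : Set Q) : Set Q :=
  {Y | ∃ X ∈ W, ∃ p : X ⟶ Y, Epi p}

/-- `Ext¹(X, F) = 0`, expressed as: every short exact sequence
`0 → F → E → X → 0` splits. -/
def Ext1Zero {Q : Type w} [Category Q] [Abelian Q] (X F : Q) : Prop :=
  ∀ S : CategoryTheory.ShortComplex Q, S.ShortExact → (S.X₁ ≅ F) → (S.X₃ ≅ X) →
    ∃ r : S.X₂ ⟶ S.X₁, S.f ≫ r = 𝟙 S.X₁

variable {C : Type u} [Category.{v} C] [Preadditive C] [HasZeroObject C]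
  [HasShift C ℤ] [∀ n : ℤ, (CategoryTheory.shiftFunctor C n).Additive] [Pretriangulated C]

/-- The shift `D[n]` of a collection of objects, closed under isomorphism. -/
def shiftSet (D : Set C) (n : ℤ) : Set C :=
  {X | ∃ Y ∈ D, Nonempty (X ≅ Y⟦n⟧)}

/-- `f` factors through an object of `D`. -/
def Factors (D : Set C) {A B : C} (f : A ⟶ B) : Prop :=
  ∃ (Z : C) (g : A ⟶ Z) (h : Z ⟶ B), Z ∈ D ∧ f = g ≫ h

/-- `X * Y`: objects `M` admitting a distinguished triangle `A → M → B → A[1]`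
with `A ∈ X`, `B ∈ Y`. -/
def star (X Y : Set C) : Set C :=
  {M | ∃ (A B : C) (f : A ⟶ M) (g : M ⟶ B) (h : B ⟶ A⟦(1:ℤ)⟧),
    A ∈ X ∧ B ∈ Y ∧ (Triangle.mk f g h ∈ distTriang C)}

/-- `R` is rigid: `Hom(R, R[1]) = 0`. -/
def Rigid (R : Set C) : Prop :=
  ∀ ⦃A B : C⦄, A ∈ R → B ∈ R → ∀ f : A ⟶ B⟦(1:ℤ)⟧, f = 0

/-- `[R[1]](X, Y[1]) = 0` : every morphism from an object of `X` to a first shift of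
an object of `Y` which factors through `R[1]` vanishes. -/
def RelRigid (R X Y : Set C) : Prop :=
  ∀ ⦃A B : C⦄, A ∈ X → B ∈ Y → ∀ f : A ⟶ B⟦(1:ℤ)⟧, Factors (shiftSet R 1) f → f = 0

/-- Closure of a collection of objects under finite direct sums and direct summands. -/
inductive addClosure (D : Set C) : C → Prop
  | of {X : C} : X ∈ D → addClosure D X
  | zero {X : C} : IsZero X → addClosure D X
  | sum {X Y Z : C} : addClosure D X → addClosure D Y →
      (∃ (pX : Z ⟶ X) (pY : Z ⟶ Y) (iX : X ⟶ Z) (iY : Y ⟶ Z),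
        iX ≫ pX = 𝟙 X ∧ iY ≫ pY = 𝟙 Y ∧ pX ≫ iX + pY ≫ iY = 𝟙 Z) →
      addClosure D Z
  | smd {X Y : C} : addClosure D Y → (∃ (s : X ⟶ Y) (r : Y ⟶ X), s ≫ r = 𝟙 X) →
      addClosure D X

/-- `D` is closed under finite direct sums and direct summands. -/
def AddClosed (D : Set C) : Prop := ∀ X : C, addClosure D X → X ∈ D

/-- closed under direct sums (expressed via biproduct data). -/
def SumClosed (D : Set C) : Prop :=
  ∀ ⦃X Y Z : C⦄, X ∈ D → Y ∈ D →
    (∃ (pX : Z ⟶ X) (pY : Z ⟶ Y) (iX : X ⟶ Z) (iY : Y ⟶ Z),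
      iX ≫ pX = 𝟙 X ∧ iY ≫ pY = 𝟙 Y ∧ pX ≫ iX + pY ≫ iY = 𝟙 Z) → Z ∈ D

/-- closed under direct summands. -/
def SummandClosed (D : Set C) : Prop :=
  ∀ ⦃X Y : C⦄, Y ∈ D → (∃ (s : X ⟶ Y) (r : Y ⟶ X), s ≫ r = 𝟙 X) → X ∈ D

/-- closed under isomorphisms. -/
def IsoClosed (D : Set C) : Prop :=
  ∀ ⦃X Y : C⦄, X ∈ D → Nonempty (X ≅ Y) → Y ∈ D

/-- `f : A ⟶ X` is a left `D`-approximation of `A`. -/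
def IsLeftApprox (D : Set C) {A X : C} (f : A ⟶ X) : Prop :=
  X ∈ D ∧ ∀ ⦃X' : C⦄, X' ∈ D → ∀ g : A ⟶ X', ∃ h : X ⟶ X', f ≫ h = g

/-- `f : X ⟶ A` is a right `D`-approximation of `A`. -/
def IsRightApprox (D : Set C) {X A : C} (f : X ⟶ A) : Prop :=
  X ∈ D ∧ ∀ ⦃X' : C⦄, X' ∈ D → ∀ g : X' ⟶ A, ∃ h : X' ⟶ X, h ≫ f = g

/-- `f` is left minimal. -/
def LeftMinimal {A B : C} (f : A ⟶ B) : Prop :=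
  ∀ u : B ⟶ B, f ≫ u = f → IsIso u

/-- `f` is right minimal. -/
def RightMinimal {A B : C} (f : A ⟶ B) : Prop :=
  ∀ u : A ⟶ A, u ≫ f = f → IsIso u

/-- `f` lies in the Jacobson radical of the category. -/
def InRadical {A B : C} (f : A ⟶ B) : Prop :=
  ∀ g : B ⟶ A, IsIso (𝟙 A - f ≫ g)

/-- indecomposable object. -/
def Indec (W : C) : Prop :=
  ¬ IsZero W ∧ ∀ p : W ⟶ W, p ≫ p = p → p = 0 ∨ p = 𝟙 W

/-- two-term `R[1]`-rigid subcategory. -/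
def TwoTermRigid (R X : Set C) : Prop :=
  RelRigid R X X ∧ X ⊆ star R (shiftSet R 1)

/-- two-term maximal `R[1]`-rigid subcategory. -/
def TwoTermMaximal (R X : Set C) : Prop :=
  TwoTermRigid R X ∧
  ∀ M ∈ star R (shiftSet R 1),
    RelRigid R {Z | addClosure (insert M X) Z} {Z | addClosure (insert M X) Z} → M ∈ X

/-- two-term weak `R[1]`-cluster tilting subcategory. -/
def TwoTermWCT (R X : Set C) : Prop :=
  X ⊆ star R (shiftSet R 1) ∧ R ⊆ star (shiftSet X (-1)) X ∧
  ∀ M : C, M ∈ X ↔ (M ∈ star R (shiftSet R 1) ∧ RelRigid R {M} X ∧ RelRigid R X {M})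

/-- `R(X) = { R₀ ∈ R | Hom(R₀, X) = 0 }`. -/
def RZero (R X : Set C) : Set C :=
  {A | A ∈ R ∧ ∀ B ∈ X, ∀ f : A ⟶ B, f = 0}

/-- `X` is `R[1]`-functorially finite. -/
def RFunctoriallyFinite (R X : Set C) : Prop :=
  (∀ R₀ ∈ R, ∃ (X₀ : C) (f : R₀ ⟶ X₀), IsLeftApprox X f) ∧
  (∀ A ∈ shiftSet R 1, ∃ (X₀ : C) (f : X₀ ⟶ A), IsRightApprox X f)

/-- Data of triangles `R₀ → X^{R₀} → V^{R₀} → R₀[1]` with minimal left `X`-approximations,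
defining the completion `M_X`. -/
structure MData (R X : Set C) where
  obj : ∀ R₀ : C, R₀ ∈ R → C
  cone : ∀ R₀ : C, R₀ ∈ R → C
  f : ∀ (R₀ : C) (h : R₀ ∈ R), R₀ ⟶ obj R₀ h
  g : ∀ (R₀ : C) (h : R₀ ∈ R), obj R₀ h ⟶ cone R₀ h
  w : ∀ (R₀ : C) (h : R₀ ∈ R), cone R₀ h ⟶ R₀⟦(1:ℤ)⟧
  tri : ∀ (R₀ : C) (h : R₀ ∈ R), Triangle.mk (f R₀ h) (g R₀ h) (w R₀ h) ∈ distTriang C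
  approx : ∀ (R₀ : C) (h : R₀ ∈ R), IsLeftApprox X (f R₀ h)
  minimal : ∀ (R₀ : C) (h : R₀ ∈ R), LeftMinimal (f R₀ h)

/-- `M_X = add (X ∪ {V^R | R ∈ R})`. -/
def MData.cat {R X : Set C} (d : MData R X) : Set C :=
  {Z | addClosure (X ∪ {V | ∃ (R₀ : C) (h : R₀ ∈ R), V = d.cone R₀ h}) Z}

/-- Data of triangles `R₀ → V_{R₀} → U_{R₀} → R₀[1]` with the last map a right
`X`-approximation, defining the completion `N_X`. -/
structure NData (R X : Set C) where
  cocone : ∀ R₀ : C, R₀ ∈ R → C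
  obj : ∀ R₀ : C, R₀ ∈ R → C
  a : ∀ (R₀ : C) (h : R₀ ∈ R), R₀ ⟶ cocone R₀ h
  b : ∀ (R₀ : C) (h : R₀ ∈ R), cocone R₀ h ⟶ obj R₀ h
  c : ∀ (R₀ : C) (h : R₀ ∈ R), obj R₀ h ⟶ R₀⟦(1:ℤ)⟧
  tri : ∀ (R₀ : C) (h : R₀ ∈ R), Triangle.mk (a R₀ h) (b R₀ h) (c R₀ h) ∈ distTriang C
  approx : ∀ (R₀ : C) (h : R₀ ∈ R), IsRightApprox X (c R₀ h)

/-- `N_X = add (X ∪ {V_R | R ∈ R})`. -/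
def NData.cat {R X : Set C} (d : NData R X) : Set C :=
  {Z | addClosure (X ∪ {V | ∃ (R₀ : C) (h : R₀ ∈ R), V = d.cocone R₀ h}) Z}

/-- `(M, N)` is an `X`-mutation pair. -/
def MutationPair (R X M N : Set C) : Prop :=
  M ≠ N ∧ TwoTermWCT R M ∧ TwoTermWCT R N ∧ X ⊆ M ∧ X ⊆ N ∧
  (∀ Y ∈ M, ∃ (Z X₀ : C) (z : Z ⟶ X₀) (x : X₀ ⟶ Y) (y : Y ⟶ Z⟦(1:ℤ)⟧),
      Z ∈ N ∧ X₀ ∈ X ∧ (Triangle.mk z x y ∈ distTriang C) ∧ Factors (shiftSet R 1) y) ∧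
  (∀ Z' ∈ N, ∃ (X' Y' : C) (z' : Z' ⟶ X') (x' : X' ⟶ Y') (y' : Y' ⟶ Z'⟦(1:ℤ)⟧),
      X' ∈ X ∧ Y' ∈ M ∧ (Triangle.mk z' x' y' ∈ distTriang C) ∧ Factors (shiftSet R 1) y')

/-- almost complete two-term weak `R[1]`-cluster tilting subcategory. -/
def AlmostComplete (R X : Set C) : Prop :=
  TwoTermRigid R X ∧ RFunctoriallyFinite R X ∧
    ∃ W : C, Indec W ∧ W ∉ X ∧ TwoTermWCT R {Z | addClosure (insert W X) Z}

/-- completion of an almost complete subcategory `X`. -/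
def IsCompletion (R X U : Set C) : Prop :=
  TwoTermWCT R U ∧ ∃ W : C, Indec W ∧ W ∉ X ∧ U = {Z | addClosure (insert W X) Z}

section Category

variable {𝒜 : Type*} [Category 𝒜]

lemma Factors.precomp {D : Set 𝒜} {A A' B : 𝒜} {f : A ⟶ B} (hf : Factors D f) (g : A' ⟶ A) :
    Factors D (g ≫ f) := by
  obtain ⟨W, a, b, hW, rfl⟩ := hf
  exact ⟨W, g ≫ a, b, hW, by simp⟩

lemma Factors.postcomp {D : Set 𝒜} {A B B' : 𝒜} {f : A ⟶ B} (hf : Factors D f) (g : B ⟶ B') :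
    Factors D (f ≫ g) := by
  obtain ⟨W, a, b, hW, rfl⟩ := hf
  exact ⟨W, a, b ≫ g, hW, by simp⟩

lemma Factors.exists_eq_comp_shift_map [HasShift 𝒜 ℤ] {R : Set 𝒜} {A B : 𝒜}
    {α : A ⟶ B⟦(1:ℤ)⟧} (h : Factors (shiftSet R 1) α) :
    ∃ R₀ ∈ R, ∃ (a : A ⟶ R₀⟦(1:ℤ)⟧) (b : R₀ ⟶ B), α = a ≫ b⟦(1:ℤ)⟧' := by
  obtain ⟨W, g, h, ⟨R₀, hR₀, ⟨e⟩⟩, rfl⟩ := h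
  obtain ⟨b, hb⟩ := (shiftFunctor 𝒜 (1:ℤ)).map_surjective (e.inv ≫ h)
  exact ⟨R₀, hR₀, g ≫ e.hom, b, by rw [hb, Category.assoc, e.hom_inv_id_assoc]⟩

lemma RightMinimal.isIso_of_comp_eq {X : Set 𝒜} {X₀ Y : 𝒜} {x : X₀ ⟶ Y} (hX₀ : X₀ ∈ X)
    (hx : IsRightApprox X x) (hxmin : RightMinimal x) {b : X₀ ⟶ X₀} {c : Y ⟶ Y} (hc : IsIso c)
    (hbc : b ≫ x = x ≫ c) : IsIso b := by
  obtain ⟨b', hb'⟩ := hx.2 hX₀ (x ≫ inv c)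
  have hbb' : IsIso (b ≫ b') := hxmin _ (by simp [hb', reassoc_of% hbc])
  have hb'b : IsIso (b' ≫ b) := hxmin _ (by simp [hbc, reassoc_of% hb'])
  have : IsSplitMono b :=
    IsSplitMono.mk' ⟨b' ≫ inv (b ≫ b'), by rw [← Category.assoc, IsIso.hom_inv_id]⟩
  have : Epi b := epi_of_epi b' b
  exact isIso_of_epi_of_isSplitMono b

end Category

section Preadditive

variable {𝒜 : Type*} [Category 𝒜] [Preadditive 𝒜]

def EndIsLocal (W : 𝒜) : Prop :=
  ∀ φ : W ⟶ W, IsIso φ ∨ IsIso (𝟙 W - φ)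

lemma EndIsLocal.of_iso {W W' : 𝒜} (e : W ≅ W') (h : EndIsLocal W') : EndIsLocal W := by
  intro φ
  have hconj : ∀ ψ : W ⟶ W, ψ = e.hom ≫ (e.inv ≫ ψ ≫ e.hom) ≫ e.inv := fun ψ => by simp
  have hsub : e.inv ≫ (𝟙 W - φ) ≫ e.hom = 𝟙 W' - e.inv ≫ φ ≫ e.hom := by
    simp [Preadditive.comp_sub, Preadditive.sub_comp]
  rcases h (e.inv ≫ φ ≫ e.hom) with h | h
  · left; rw [hconj φ]; infer_instance
  · right; rw [hconj (𝟙 W - φ), hsub]; infer_instance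

lemma eq_zero_of_isIso_id_sub {W V : 𝒜} {c : W ⟶ W} (hc : IsIso (𝟙 W - c)) {g : W ⟶ V}
    (h : c ≫ g = g) : g = 0 := by
  rw [← cancel_epi (𝟙 W - c), Preadditive.sub_comp, h, Category.id_comp, sub_self, comp_zero]

lemma EndIsLocal.isIso_of_comp_eq_self {W V : 𝒜} (hW : EndIsLocal W) {c : W ⟶ W} {g : W ⟶ V}
    (hg : g ≠ 0) (h : c ≫ g = g) : IsIso c :=
  (hW c).resolve_right fun hc => hg (eq_zero_of_isIso_id_sub hc h)

lemma Indec.endIsLocal (hKS : KrullSchmidtCat 𝒜) {W : 𝒜} (hW : Indec W) : EndIsLocal W := by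
  obtain ⟨n, f, p, ι, hιp, hsum, hloc⟩ := hKS W
  obtain ⟨i, hi⟩ : ∃ i, p i ≫ ι i = 𝟙 W := by
    by_contra! h
    have hzero : ∀ i, p i ≫ ι i = 0 := fun i =>
      (hW.2 _ (by rw [Category.assoc, reassoc_of% (hιp i)])).resolve_right (h i)
    exact hW.1 ((IsZero.iff_id_eq_zero W).2 <| by
      rw [← hsum]; exact Finset.sum_eq_zero fun i _ => hzero i)
  exact EndIsLocal.of_iso ⟨p i, ι i, hi, hιp i⟩ (hloc i)

lemma EndIsLocal.indec {W : 𝒜} (hW : EndIsLocal W) (hnz : ¬ IsZero W) : Indec W := by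
  refine ⟨hnz, fun p hp => ?_⟩
  rcases hW p with hiso | hiso
  · exact Or.inr ((cancel_epi p).1 (by rw [hp, Category.comp_id]))
  · exact Or.inl (eq_zero_of_isIso_id_sub hiso hp)

lemma addClosure.exists_retract_of_indec (hKS : KrullSchmidtCat 𝒜) {D : Set 𝒜} {Y Z : 𝒜}
    (hY : Indec Y) (hZ : addClosure D Z) (hYZ : ∃ (s : Y ⟶ Z) (r : Z ⟶ Y), s ≫ r = 𝟙 Y) :
    ∃ B ∈ D, ∃ (s : Y ⟶ B) (r : B ⟶ Y), s ≫ r = 𝟙 Y := by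
  induction hZ with
  | of hB => exact ⟨_, hB, hYZ⟩
  | zero hB =>
      obtain ⟨s, r, hsr⟩ := hYZ
      exact absurd (by rw [IsZero.iff_id_eq_zero, ← hsr, hB.eq_of_tgt s 0, zero_comp]) hY.1
  | sum _ _ hdata ih₁ ih₂ =>
      obtain ⟨s, r, hsr⟩ := hYZ
      obtain ⟨p₁, p₂, i₁, i₂, -, -, hsum⟩ := hdata
      have hsplit : (s ≫ p₁) ≫ (i₁ ≫ r) + (s ≫ p₂) ≫ (i₂ ≫ r) = 𝟙 Y := by
        have : s ≫ (p₁ ≫ i₁ + p₂ ≫ i₂) ≫ r = 𝟙 Y := by rw [hsum, Category.id_comp, hsr]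
        simpa only [Preadditive.add_comp, Preadditive.comp_add, Category.assoc] using this
      rcases hY.endIsLocal hKS ((s ≫ p₁) ≫ (i₁ ≫ r)) with h | h
      · exact ih₁ ⟨s ≫ p₁, (i₁ ≫ r) ≫ inv ((s ≫ p₁) ≫ (i₁ ≫ r)),
          by rw [← Category.assoc, IsIso.hom_inv_id]⟩
      · rw [← hsplit, add_sub_cancel_left] at h
        exact ih₂ ⟨s ≫ p₂, (i₂ ≫ r) ≫ inv ((s ≫ p₂) ≫ (i₂ ≫ r)),
          by rw [← Category.assoc, IsIso.hom_inv_id]⟩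
  | smd _ hdata ih =>
      obtain ⟨s, r, hsr⟩ := hYZ
      obtain ⟨s', r', hs'r'⟩ := hdata
      exact ih ⟨s ≫ s', r' ≫ r, by simp [reassoc_of% hs'r', hsr]⟩

end Preadditive

section Shift

variable {𝒜 : Type*} [Category 𝒜] [Preadditive 𝒜] [HasShift 𝒜 ℤ]

lemma RelRigid.addClosure_right [∀ n : ℤ, (shiftFunctor 𝒜 n).Additive] {R D E : Set 𝒜}
    (h : RelRigid R D E) :
    RelRigid R D {Z | addClosure E Z} := by
  intro A B hA (hB : addClosure E B)
  induction hB with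
  | of hB => exact h hA hB
  | zero hB => exact fun α _ => ((shiftFunctor 𝒜 (1:ℤ)).map_isZero hB).eq_of_tgt α 0
  | sum _ _ hdata ih₁ ih₂ =>
      intro α hα
      obtain ⟨p₁, p₂, i₁, i₂, -, -, hsum⟩ := hdata
      have h₁ : α ≫ p₁⟦(1:ℤ)⟧' = 0 := ih₁ _ (hα.postcomp _)
      have h₂ : α ≫ p₂⟦(1:ℤ)⟧' = 0 := ih₂ _ (hα.postcomp _)
      calc α = α ≫ (p₁ ≫ i₁ + p₂ ≫ i₂)⟦(1:ℤ)⟧' := by simp [hsum]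
        _ = 0 := by simp [reassoc_of% h₁, reassoc_of% h₂]
  | smd _ hdata ih =>
      intro α hα
      obtain ⟨s, r, hsr⟩ := hdata
      calc α = α ≫ (s ≫ r)⟦(1:ℤ)⟧' := by simp [hsr]
        _ = 0 := by simp [reassoc_of% (ih _ (hα.postcomp _))]

lemma RelRigid.addClosure_left {R D E : Set 𝒜} (h : RelRigid R D E) :
    RelRigid R {Z | addClosure D Z} E := by
  intro A B (hA : addClosure D A) hB
  induction hA with
  | of hA => exact h hA hB
  | zero hA => exact fun α _ => hA.eq_of_src α 0
  | sum _ _ hdata ih₁ ih₂ =>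
      intro α hα
      obtain ⟨p₁, p₂, i₁, i₂, -, -, hsum⟩ := hdata
      calc α = (p₁ ≫ i₁ + p₂ ≫ i₂) ≫ α := by rw [hsum, Category.id_comp]
        _ = 0 := by
          rw [Preadditive.add_comp, Category.assoc, Category.assoc, ih₁ _ (hα.precomp _),
            ih₂ _ (hα.precomp _), comp_zero, comp_zero, add_zero]
  | smd _ hdata ih =>
      intro α hα
      obtain ⟨s, r, hsr⟩ := hdata
      calc α = (s ≫ r) ≫ α := by rw [hsr, Category.id_comp]
        _ = 0 := by rw [Category.assoc, ih _ (hα.precomp _), comp_zero]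

lemma RelRigid.addClosure [∀ n : ℤ, (shiftFunctor 𝒜 n).Additive] {R D E : Set 𝒜}
    (h : RelRigid R D E) :
    RelRigid R {Z | addClosure D Z} {Z | addClosure E Z} :=
  h.addClosure_right.addClosure_left

end Shift

lemma exists_comp_eq_of_mor₃_comp_shift_eq_zero {Z X₀ Y M : C} {z : Z ⟶ X₀} {x : X₀ ⟶ Y}
    {y : Y ⟶ Z⟦(1:ℤ)⟧} (hT : Triangle.mk z x y ∈ distTriang C) (φ : Z ⟶ M)
    (hφ : y ≫ φ⟦(1:ℤ)⟧' = 0) : ∃ g : X₀ ⟶ M, z ≫ g = φ := by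
  obtain ⟨g, hg⟩ : ∃ g : X₀⟦(1:ℤ)⟧ ⟶ M⟦(1:ℤ)⟧, φ⟦(1:ℤ)⟧' = (-z⟦(1:ℤ)⟧') ≫ g :=
    Triangle.yoneda_exact₃ _ (rot_of_distTriang _ hT) _ hφ
  obtain ⟨ξ, rfl⟩ := (shiftFunctor C (1:ℤ)).map_surjective g
  refine ⟨-ξ, (shiftFunctor C (1:ℤ)).map_injective ?_⟩
  rw [hg]
  simp

section MData

variable {R X : Set C} (d : MData R X)

-- `d.cat` is by definition `{Z | addClosure d.gens Z}`.
def MData.gens : Set C :=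
  X ∪ {V | ∃ (R₀ : C) (h : R₀ ∈ R), V = d.cone R₀ h}

lemma MData.factors_of_g_comp_eq_zero {R₀ : C} (h₀ : R₀ ∈ R) {W : C} (φ : d.cone R₀ h₀ ⟶ W)
    (hφ : d.g R₀ h₀ ≫ φ = 0) : Factors (shiftSet R 1) φ := by
  obtain ⟨t, ht⟩ := Triangle.yoneda_exact₃ _ (d.tri R₀ h₀) φ hφ
  exact ⟨_, d.w R₀ h₀, t, ⟨R₀, h₀, ⟨Iso.refl _⟩⟩, ht⟩

lemma MData.relRigid_X_gens (hrig : Rigid R) (hX : RelRigid R X X) : RelRigid R X d.gens := by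
  rintro A _ hA (hB | ⟨R₁, h₁, rfl⟩) α hα
  · exact hX hA hB α hα
  obtain ⟨R₂, hR₂, a, b, rfl⟩ := hα.exists_eq_comp_shift_map
  obtain ⟨c, rfl⟩ : ∃ c : R₂ ⟶ d.obj R₁ h₁, b = c ≫ d.g R₁ h₁ :=
    Triangle.coyoneda_exact₃ _ (d.tri R₁ h₁) b (hrig hR₂ h₁ _)
  have hac : a ≫ c⟦(1:ℤ)⟧' = 0 :=
    hX hA (d.approx R₁ h₁).1 _ ⟨_, a, c⟦(1:ℤ)⟧', ⟨R₂, hR₂, ⟨Iso.refl _⟩⟩, rfl⟩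
  rw [CategoryTheory.Functor.map_comp, reassoc_of% hac, zero_comp]

lemma MData.exists_f_comp_eq (hrig : Rigid R) {R₀ : C} (h₀ : R₀ ∈ R) {B : C} (hB : B ∈ d.gens)
    (t : R₀ ⟶ B) : ∃ u, d.f R₀ h₀ ≫ u = t := by
  rcases hB with hB | ⟨R₁, h₁, rfl⟩
  · exact (d.approx R₀ h₀).2 hB t
  · obtain ⟨c, rfl⟩ := Triangle.coyoneda_exact₃ _ (d.tri R₁ h₁) t (hrig h₀ h₁ _)
    obtain ⟨u, hu⟩ := (d.approx R₀ h₀).2 (d.approx R₁ h₁).1 c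
    exact ⟨u ≫ d.g R₁ h₁, by rw [← Category.assoc, hu]; rfl⟩

lemma MData.relRigid_gens (hrig : Rigid R) (hX : RelRigid R X X) :
    RelRigid R d.gens d.gens := by
  rintro _ B (hA | ⟨R₀, h₀, rfl⟩) hB α hα
  · exact d.relRigid_X_gens hrig hX hA hB α hα
  have hgα : d.g R₀ h₀ ≫ α = 0 :=
    d.relRigid_X_gens hrig hX (d.approx R₀ h₀).1 hB _ (hα.precomp _)
  obtain ⟨t, rfl⟩ := Triangle.yoneda_exact₃ _ (d.tri R₀ h₀) α hgα
  obtain ⟨t₀, rfl⟩ := (shiftFunctor C (1:ℤ)).map_surjective t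
  obtain ⟨u, rfl⟩ := d.exists_f_comp_eq hrig h₀ hB t₀
  have hwf : d.w R₀ h₀ ≫ (d.f R₀ h₀)⟦(1:ℤ)⟧' = 0 := comp_distTriang_mor_zero₃₁ _ (d.tri R₀ h₀)
  change d.w R₀ h₀ ≫ (d.f R₀ h₀ ≫ u)⟦(1:ℤ)⟧' = 0
  rw [CategoryTheory.Functor.map_comp, reassoc_of% hwf, zero_comp]

lemma MData.relRigid_cat (hrig : Rigid R) (hX : RelRigid R X X) : RelRigid R d.cat d.cat :=
  (d.relRigid_gens hrig hX).addClosure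

lemma MData.exists_retract_cone (hKS : KrullSchmidtCat C) (haddX : AddClosed X) {Y : C}
    (hY : Y ∈ d.cat) (hYX : Y ∉ X) (hYind : Indec Y) :
    ∃ (R₀ : C) (h₀ : R₀ ∈ R) (s : Y ⟶ d.cone R₀ h₀) (r : d.cone R₀ h₀ ⟶ Y), s ≫ r = 𝟙 Y := by
  obtain ⟨B, hB | ⟨R₀, h₀, rfl⟩, s, r, hsr⟩ :=
    addClosure.exists_retract_of_indec hKS hYind hY ⟨𝟙 Y, 𝟙 Y, Category.id_comp _⟩
  · exact absurd (haddX Y (addClosure.smd (addClosure.of hB) ⟨s, r, hsr⟩)) hYX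
  · exact ⟨R₀, h₀, s, r, hsr⟩

end MData

section Triangle

variable {R X : Set C} {Z X₀ Y : C} {z : Z ⟶ X₀} {x : X₀ ⟶ Y} {y : Y ⟶ Z⟦(1:ℤ)⟧}

lemma mor₃_ne_zero_of_not_mem (haddX : AddClosed X) (hT : Triangle.mk z x y ∈ distTriang C)
    (hX₀ : X₀ ∈ X) (hYX : Y ∉ X) : y ≠ 0 := by
  intro hy
  obtain ⟨s, hs⟩ := Triangle.coyoneda_exact₃ _ hT (𝟙 Y) (by change 𝟙 Y ≫ y = 0; rw [hy, comp_zero])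
  exact hYX (haddX Y (addClosure.smd (addClosure.of hX₀) ⟨s, x, hs.symm⟩))

lemma factors_mor₃_of_indec_mem_cat (hKS : KrullSchmidtCat C) (haddX : AddClosed X)
    (d : MData R X) (hY : Y ∈ d.cat) (hYX : Y ∉ X) (hYind : Indec Y)
    (hT : Triangle.mk z x y ∈ distTriang C) (hx : IsRightApprox X x) :
    Factors (shiftSet R 1) y := by
  obtain ⟨R₀, h₀, s, r, hsr⟩ := d.exists_retract_cone hKS haddX hY hYX hYind
  obtain ⟨h, hh⟩ := hx.2 (d.approx R₀ h₀).1 (d.g R₀ h₀ ≫ r)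
  have hxy : x ≫ y = 0 := comp_distTriang_mor_zero₂₃ _ hT
  have hgry : d.g R₀ h₀ ≫ r ≫ y = 0 := by rw [← reassoc_of% hh, hxy, comp_zero]
  simpa [reassoc_of% hsr] using (d.factors_of_g_comp_eq_zero h₀ _ hgry).precomp s

lemma endIsLocal_obj₁ {D : Set C} (hT : Triangle.mk z x y ∈ distTriang C) (hX₀ : X₀ ∈ X)
    (hx : IsRightApprox X x) (hxmin : RightMinimal x) (hz : IsLeftApprox D z)
    (hY : EndIsLocal Y) : EndIsLocal Z := by
  have key : ∀ f : Triangle.mk z x y ⟶ Triangle.mk z x y, IsIso f.hom₃ → IsIso f.hom₁ := by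
    intro f hf
    exact isIso₁_of_isIso₂₃ f hT hT (hxmin.isIso_of_comp_eq hX₀ hx hf f.comm₂.symm) hf
  intro φ
  obtain ⟨b, hb⟩ := hz.2 hz.1 (φ ≫ z)
  obtain ⟨c, hc₂, hc₃⟩ := complete_distinguished_triangle_morphism _ _ hT hT φ b hb
  let f : Triangle.mk z x y ⟶ Triangle.mk z x y := Triangle.homMk _ _ φ b c hb hc₂ hc₃
  rcases hY c with hc | hc
  · exact Or.inl (key f hc)
  · exact Or.inr (key (𝟙 _ - f) hc)

lemma leftMinimal_mor₁ (hT : Triangle.mk z x y ∈ distTriang C) (hX₀ : X₀ ∈ X)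
    (hx : IsRightApprox X x) (hxmin : RightMinimal x) (hY : EndIsLocal Y) (hy : y ≠ 0) :
    LeftMinimal z := by
  intro u hu
  obtain ⟨c, hc₂, hc₃⟩ : ∃ c : Y ⟶ Y, x ≫ c = u ≫ x ∧ y ≫ (𝟙 Z)⟦(1:ℤ)⟧' = c ≫ y :=
    complete_distinguished_triangle_morphism _ _ hT hT (𝟙 Z) u
      (by change z ≫ u = 𝟙 Z ≫ z; rw [Category.id_comp, hu])
  rw [CategoryTheory.Functor.map_id, Category.comp_id] at hc₃
  exact hxmin.isIso_of_comp_eq hX₀ hx (hY.isIso_of_comp_eq_self hy hc₃.symm) hc₂.symm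

lemma relRigid_obj₁ (hXrig : RelRigid R X X) (hT : Triangle.mk z x y ∈ distTriang C)
    (hX₀ : X₀ ∈ X) (hx : IsRightApprox X x) : RelRigid R X {Z} := by
  rintro A _ hA rfl α hα
  obtain ⟨β, rfl⟩ := Triangle.coyoneda_exact₁ _ hT α (hXrig hA hX₀ _ (hα.postcomp _))
  obtain ⟨γ, rfl⟩ := hx.2 hA β
  have hxy : x ≫ y = 0 := comp_distTriang_mor_zero₂₃ _ hT
  change (γ ≫ x) ≫ y = 0
  rw [Category.assoc, hxy, comp_zero]

end Triangle

theorem statement_12_general (hKS : KrullSchmidtCat C) (R X : Set C)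
    (hrig : Rigid R) (haddX : AddClosed X)
    (hX : TwoTermRigid R X)
    (d : MData R X) {Y Z X₀ : C} (hY : Y ∈ d.cat) (hYX : Y ∉ X) (hYind : Indec Y)
    (z : Z ⟶ X₀) (x : X₀ ⟶ Y) (y : Y ⟶ Z⟦(1:ℤ)⟧)
    (hT : Triangle.mk z x y ∈ distTriang C)
    (hX₀ : X₀ ∈ X) (hx : IsRightApprox X x) (hxmin : RightMinimal x) :
    Factors (shiftSet R 1) y ∧ (IsLeftApprox d.cat z ∧ LeftMinimal z) ∧
      (Indec Z ∧ Z ∉ X) ∧ RelRigid R X {Z} := by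
  have hYloc : EndIsLocal Y := hYind.endIsLocal hKS
  have hy : Factors (shiftSet R 1) y := factors_mor₃_of_indec_mem_cat hKS haddX d hY hYX hYind hT hx
  have hy0 : y ≠ 0 := mor₃_ne_zero_of_not_mem haddX hT hX₀ hYX
  have hMrig : RelRigid R d.cat d.cat := d.relRigid_cat hrig hX.1
  have hz : IsLeftApprox d.cat z := ⟨addClosure.of (Or.inl hX₀), fun M hM φ =>
    exists_comp_eq_of_mor₃_comp_shift_eq_zero hT φ (hMrig hY hM _ (hy.postcomp _))⟩
  have hZ : ¬ IsZero Z := fun h => hy0 (((shiftFunctor C (1:ℤ)).map_isZero h).eq_of_tgt y 0)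
  refine ⟨hy, ⟨hz, leftMinimal_mor₁ hT hX₀ hx hxmin hYloc hy0⟩, ⟨?_, ?_⟩,
    relRigid_obj₁ hX.1 hT hX₀ hx⟩
  · exact (endIsLocal_obj₁ hT hX₀ hx hxmin hz hYloc).indec hZ
  · exact fun hZX => hy0 (hMrig hY (addClosure.of (Or.inl hZX)) y hy)

theorem statement_12 (hKS : KrullSchmidtCat C) (R X : Set C)
    (hrig : Rigid R) (haddR : AddClosed R) (haddX : AddClosed X)
    (hX : TwoTermRigid R X) (hff : RFunctoriallyFinite R X)
    (d : MData R X) {Y Z X₀ : C} (hY : Y ∈ d.cat) (hYX : Y ∉ X) (hYind : Indec Y)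
    (z : Z ⟶ X₀) (x : X₀ ⟶ Y) (y : Y ⟶ Z⟦(1:ℤ)⟧)
    (hT : Triangle.mk z x y ∈ distTriang C)
    (hX₀ : X₀ ∈ X) (hx : IsRightApprox X x) (hxmin : RightMinimal x) :
    Factors (shiftSet R 1) y ∧ (IsLeftApprox d.cat z ∧ LeftMinimal z) ∧
      (Indec Z ∧ Z ∉ X) ∧ RelRigid R X {Z} :=
  statement_12_general hKS R X hrig haddX hX d hY hYX hYind z x y hT hX₀ hx hxmin

end RelCT
end

section
/- Assume in addition that R is 2-rigid, i.e. Hom(R, R[i]) = 0 for i = 1, 2. Then A = R*R[1] is closed under extensions; moreover Hom_C(R, A[1]) = 0, Hom_C(A, R[2]) = 0, and for all A, B ∈ A one has [R[1]](A, B[1]) = Hom_C(A, B[1]); consequently a subcategory X ⊆ A is R[1]-rigid if and only if it is rigid. -/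
open CategoryTheory CategoryTheory.Limits CategoryTheory.Pretriangulated

universe v u w

namespace RelCT

variable {C : Type u} [Category.{v} C] [Preadditive C] [HasZeroObject C]
  [HasShift C ℤ] [∀ n : ℤ, (CategoryTheory.shiftFunctor C n).Additive] [Pretriangulated C]

/-!
The vanishing statements come from the long exact Hom-sequences of the triangles
`R → A → S → R[1]` defining objects of `R * R[1]`, using `Hom(R, R[1]) = Hom(R, R[2]) = 0`.

For closure under extensions, let `A₁ → E → A₂ → A₁[1]` be a triangle with `Aᵢ` given by
`Rᵢ → Aᵢ → Sᵢ → Rᵢ[1]`. Since `Hom(R, A₁[1]) = 0`, the map `R₂ → A₂` lifts to `E`, and together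
with `R₁ → A₁ → E` it gives a right `R`-approximation `q : R₁ ⊕ R₂ → E`. Its cone
`E → W → (R₁ ⊕ R₂)[1]` then has `Hom(R, W) = 0`, and diagram chasing shows that `E → W` factors
through `S₁ ⊕ S₂`. This forces `𝟙 W` to factor through `S₁ ⊕ S₂ ⊕ (R₁ ⊕ R₂)[1] ∈ R[1]`, so `W` is
a summand of an object of `R[1]`. The argument only uses the axioms of a pretriangulated
category, not the octahedral axiom.
-/

open CategoryTheory.Category CategoryTheory.Preadditive

set_option linter.unusedSectionVars false

def HomZero (X Y : Set C) : Prop :=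
  ∀ ⦃A B : C⦄, A ∈ X → B ∈ Y → ∀ f : A ⟶ B, f = 0

lemma mem_shiftSet_shift {D : Set C} {X : C} (hX : X ∈ D) (n : ℤ) : X⟦n⟧ ∈ shiftSet D n :=
  ⟨X, hX, ⟨Iso.refl _⟩⟩

lemma shiftSet_shiftSet (D : Set C) {a b c : ℤ} (h : a + b = c) :
    shiftSet (shiftSet D a) b = shiftSet D c := by
  ext X
  constructor
  · rintro ⟨Y, ⟨Z, hZ, ⟨e⟩⟩, ⟨e'⟩⟩
    exact ⟨Z, hZ,
      ⟨e' ≪≫ (shiftFunctor C b).mapIso e ≪≫ ((shiftFunctorAdd' C a b c h).app Z).symm⟩⟩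
  · rintro ⟨Z, hZ, ⟨e⟩⟩
    exact ⟨Z⟦a⟧, mem_shiftSet_shift hZ a, ⟨e ≪≫ (shiftFunctorAdd' C a b c h).app Z⟩⟩

lemma homZero_shiftSet_of_forall {X Y : Set C} {n : ℤ}
    (h : ∀ ⦃A B : C⦄, A ∈ X → B ∈ Y → ∀ f : A ⟶ B⟦n⟧, f = 0) : HomZero X (shiftSet Y n) := by
  rintro A B hA ⟨B', hB', ⟨e⟩⟩ f
  simpa using congrArg (· ≫ e.inv) (h hA hB' (f ≫ e.hom))

lemma HomZero.shiftSet {X Y : Set C} (h : HomZero X Y) (n : ℤ) :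
    HomZero (shiftSet X n) (shiftSet Y n) := by
  rintro A B ⟨A', hA', ⟨e⟩⟩ ⟨B', hB', ⟨e'⟩⟩ f
  obtain ⟨g, hg⟩ := (shiftFunctor C n).map_surjective (e.inv ≫ f ≫ e'.hom)
  rw [h hA' hB' g, Functor.map_zero] at hg
  simpa using congrArg (e.hom ≫ · ≫ e'.inv) hg.symm

lemma HomZero.star_right {X Y Z : Set C} (hY : HomZero X Y) (hZ : HomZero X Z) :
    HomZero X (star Y Z) := by
  rintro A M hA ⟨A', B', f', g', h', hA', hB', hT⟩ f
  obtain ⟨k, rfl⟩ := Triangle.coyoneda_exact₂ _ hT f (hZ hA hB' _)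
  rw [hY hA hA' k]
  exact zero_comp

lemma HomZero.star_left {X Y Z : Set C} (hY : HomZero Y X) (hZ : HomZero Z X) :
    HomZero (star Y Z) X := by
  rintro M B ⟨A', B', f', g', h', hA', hB', hT⟩ hB f
  obtain ⟨t, rfl⟩ := Triangle.yoneda_exact₂ _ hT f (hY hA' hB _)
  rw [hZ hB' hB t]
  exact comp_zero

lemma shift_mem_star {X Y : Set C} {M : C} (hM : M ∈ star X Y) (n : ℤ) :
    M⟦n⟧ ∈ star (shiftSet X n) (shiftSet Y n) := by
  obtain ⟨A, B, f, g, h, hA, hB, hT⟩ := hM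
  exact ⟨_, _, _, _, _, mem_shiftSet_shift hA n, mem_shiftSet_shift hB n,
    Triangle.shift_distinguished _ hT n⟩

lemma _root_.CategoryTheory.Pretriangulated.Triangle.yoneda_exact₁ (T : Triangle C)
    (hT : T ∈ distTriang C) {X : C} (f : T.obj₁ ⟶ X) (hf : T.mor₃ ≫ f⟦(1:ℤ)⟧' = 0) :
    ∃ g : T.obj₂ ⟶ X, f = T.mor₁ ≫ g := by
  obtain ⟨g, hg⟩ := Triangle.yoneda_exact₂ _ (rot_of_distTriang _ (rot_of_distTriang _ hT)) _ hf
  obtain ⟨g', hg'⟩ : ∃ g' : T.obj₂ ⟶ X, g'⟦(1:ℤ)⟧' = g := (shiftFunctor C (1:ℤ)).map_surjective g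
  refine ⟨-g', (shiftFunctor C (1:ℤ)).map_injective ?_⟩
  rw [hg, ← hg']
  simp only [Triangle.rotate_mor₂, Triangle.rotate_mor₃, Functor.map_comp, Functor.map_neg]
  exact (neg_comp _ _).trans (comp_neg ((shiftFunctor C (1:ℤ)).map T.mor₁) _).symm

lemma addClosure.of_iso {D : Set C} {X Y : C} (hY : addClosure D Y) (e : X ≅ Y) :
    addClosure D X :=
  addClosure.smd hY ⟨e.hom, e.inv, e.hom_inv_id⟩

lemma addClosure.map {D D' : Set C} (F : C ⥤ C) [F.Additive]
    (hF : ∀ X ∈ D, addClosure D' (F.obj X)) {X : C} (hX : addClosure D X) :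
    addClosure D' (F.obj X) := by
  induction hX with
  | of hX => exact hF _ hX
  | zero hX => exact addClosure.zero (F.map_isZero hX)
  | sum _ _ hZ ihX ihY =>
    obtain ⟨pX, pY, iX, iY, hX, hY, htot⟩ := hZ
    refine addClosure.sum ihX ihY ⟨F.map pX, F.map pY, F.map iX, F.map iY, ?_, ?_, ?_⟩
    · rw [← F.map_comp, hX, F.map_id]
    · rw [← F.map_comp, hY, F.map_id]
    · rw [← F.map_comp, ← F.map_comp, ← F.map_add, htot, F.map_id]
  | smd _ hsr ih =>
    obtain ⟨s, r, hsr⟩ := hsr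
    exact addClosure.smd ih ⟨F.map s, F.map r, by rw [← F.map_comp, hsr, F.map_id]⟩

lemma AddClosed.shiftSet {D : Set C} (hD : AddClosed D) (n : ℤ) : AddClosed (shiftSet D n) := by
  intro X hX
  have hX' : addClosure D (X⟦-n⟧) := by
    refine addClosure.map (shiftFunctor C (-n)) ?_ hX
    rintro Y ⟨Z, hZ, ⟨e⟩⟩
    exact (addClosure.of hZ).of_iso
      ((shiftFunctor C (-n)).mapIso e ≪≫ (shiftFunctorCompIsoId C n (-n) (by simp)).app Z)
  exact ⟨X⟦-n⟧, hD _ hX', ⟨((shiftFunctorCompIsoId C (-n) n (by simp)).app X).symm⟩⟩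

lemma AddClosed.biprod_mem {D : Set C} (hD : AddClosed D) {X Y : C} (hX : X ∈ D) (hY : Y ∈ D) :
    (X ⊞ Y : C) ∈ D :=
  hD _ (addClosure.sum (.of hX) (.of hY) ⟨biprod.fst, biprod.snd, biprod.inl, biprod.inr,
    biprod.inl_fst, biprod.inr_snd, biprod.total⟩)

lemma AddClosed.mem_of_factors_id {D : Set C} (hD : AddClosed D) {X : C}
    (h : Factors D (𝟙 X)) : X ∈ D := by
  obtain ⟨Z, s, r, hZ, hsr⟩ := h
  exact hD _ (addClosure.smd (.of hZ) ⟨s, r, hsr.symm⟩)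

lemma Factors.add {D : Set C} (hD : AddClosed D) {X Y : C} {f g : X ⟶ Y}
    (hf : Factors D f) (hg : Factors D g) : Factors D (f + g) := by
  obtain ⟨Z, a, b, hZ, rfl⟩ := hf
  obtain ⟨Z', c, d, hZ', rfl⟩ := hg
  exact ⟨Z ⊞ Z', biprod.lift a c, biprod.desc b d, hD.biprod_mem hZ hZ', by simp⟩

lemma mem_of_distTriang_of_factors {D : Set C} (hD : AddClosed D) {P E W : C} {q : P ⟶ E}
    {π : E ⟶ W} {δ : W ⟶ P⟦(1:ℤ)⟧} (hT : Triangle.mk q π δ ∈ distTriang C)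
    (hP : P⟦(1:ℤ)⟧ ∈ D) (hPD : HomZero {P} D) (hπ : Factors D π) : W ∈ D := by
  obtain ⟨S, σ, χ, hS, hσχ⟩ := hπ
  obtain ⟨ψ, hψ⟩ : ∃ ψ : W ⟶ S, σ = π ≫ ψ := Triangle.yoneda_exact₂ _ hT σ (hPD rfl hS _)
  obtain ⟨r, hr⟩ : ∃ r : P⟦(1:ℤ)⟧ ⟶ W, 𝟙 W - ψ ≫ χ = δ ≫ r :=
    Triangle.yoneda_exact₃ _ hT _ (by
      change π ≫ _ = 0
      rw [comp_sub, comp_id, ← assoc, ← hψ, ← hσχ, sub_self])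
  have hid : 𝟙 W = ψ ≫ χ + δ ≫ r := by
    rw [← hr]
    abel
  exact hD.mem_of_factors_id (hid ▸ Factors.add hD ⟨S, ψ, χ, hS, rfl⟩ ⟨_, δ, r, hP, rfl⟩)

lemma homZero_of_isRightApprox {D : Set C} (hD : HomZero D (shiftSet D 1)) {P E W : C}
    {q : P ⟶ E} {π : E ⟶ W} {δ : W ⟶ P⟦(1:ℤ)⟧} (hT : Triangle.mk q π δ ∈ distTriang C)
    (hq : IsRightApprox D q) : HomZero D {W} := by
  rintro R₀ _ hR₀ rfl m
  obtain ⟨m', rfl⟩ : ∃ m' : R₀ ⟶ E, m = m' ≫ π :=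
    Triangle.coyoneda_exact₃ _ hT m (hD hR₀ (mem_shiftSet_shift hq.1 1) _)
  obtain ⟨k, rfl⟩ := hq.2 hR₀ m'
  have hqπ : q ≫ π = 0 := comp_distTriang_mor_zero₁₂ _ hT
  rw [assoc, hqπ, comp_zero]

lemma factors_of_mem_star {X Z : Set C} {M Y : C} (hM : M ∈ star X Z) (f : M ⟶ Y)
    (hY : HomZero X {Y}) : Factors Z f := by
  obtain ⟨A, B, a, b, c, hA, hB, hT⟩ := hM
  obtain ⟨t, ht⟩ := Triangle.yoneda_exact₂ _ hT f (hY hA rfl _)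
  exact ⟨B, b, t, hB, ht⟩

section TwoRigid

variable {R : Set C}

lemma homZero_shiftSet_one_shiftSet_two (hR₁ : HomZero R (shiftSet R 1)) :
    HomZero (shiftSet R 1) (shiftSet R 2) := by
  simpa [shiftSet_shiftSet R (show (1:ℤ) + 1 = 2 by norm_num)] using hR₁.shiftSet 1

lemma homZero_shift_of_mem_star (hR₁ : HomZero R (shiftSet R 1)) (hR₂ : HomZero R (shiftSet R 2))
    {B : C} (hB : B ∈ star R (shiftSet R 1)) : HomZero R {B⟦(1:ℤ)⟧} := by
  have hB₁ := shift_mem_star hB 1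
  rw [shiftSet_shiftSet R (show (1:ℤ) + 1 = 2 by norm_num)] at hB₁
  rintro R₀ _ hR₀ rfl f
  exact hR₁.star_right hR₂ hR₀ hB₁ f

lemma homZero_star_shiftSet_two (hR₁ : HomZero R (shiftSet R 1))
    (hR₂ : HomZero R (shiftSet R 2)) : HomZero (star R (shiftSet R 1)) (shiftSet R 2) :=
  hR₂.star_left (homZero_shiftSet_one_shiftSet_two hR₁)

variable {A₁ A₂ E Ra Rb Sa Sb : C} {fa : Ra ⟶ A₁} {ga : A₁ ⟶ Sa} {wa : Sa ⟶ Ra⟦(1:ℤ)⟧}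
  {fb : Rb ⟶ A₂} {gb : A₂ ⟶ Sb} {wb : Sb ⟶ Rb⟦(1:ℤ)⟧} {u : A₁ ⟶ E} {v : E ⟶ A₂}
  {h : A₂ ⟶ A₁⟦(1:ℤ)⟧}

lemma isRightApprox_biprod_desc (hR₁ : HomZero R (shiftSet R 1))
    (hT₁ : Triangle.mk fa ga wa ∈ distTriang C) (hT₂ : Triangle.mk fb gb wb ∈ distTriang C)
    (hT₃ : Triangle.mk u v h ∈ distTriang C) (hP : (Ra ⊞ Rb : C) ∈ R)
    (hSa : Sa ∈ shiftSet R 1) (hSb : Sb ∈ shiftSet R 1) {eb : Rb ⟶ E} (heb : fb = eb ≫ v) :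
    IsRightApprox R (biprod.desc (fa ≫ u) eb) := by
  refine ⟨hP, fun R₀ hR₀ m => ?_⟩
  obtain ⟨n, hn⟩ : ∃ n : R₀ ⟶ Rb, m ≫ v = n ≫ fb :=
    Triangle.coyoneda_exact₂ _ hT₂ _ (by
      change (m ≫ v) ≫ gb = 0
      rw [assoc]
      exact hR₁ hR₀ hSb _)
  obtain ⟨l, hl⟩ : ∃ l : R₀ ⟶ A₁, m - n ≫ eb = l ≫ u :=
    Triangle.coyoneda_exact₂ _ hT₃ _ (by
      change (m - n ≫ eb) ≫ v = 0
      rw [sub_comp, assoc, ← heb, hn, sub_self])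
  obtain ⟨k, rfl⟩ : ∃ k : R₀ ⟶ Ra, l = k ≫ fa :=
    Triangle.coyoneda_exact₂ _ hT₁ l (hR₁ hR₀ hSa _)
  exact ⟨biprod.lift k n, by rw [biprod.lift_desc, ← assoc, ← hl, sub_add_cancel]⟩

lemma factors_of_extension {D : Set C} (hD : AddClosed D)
    (hT₁ : Triangle.mk fa ga wa ∈ distTriang C) (hT₂ : Triangle.mk fb gb wb ∈ distTriang C)
    (hT₃ : Triangle.mk u v h ∈ distTriang C) (hSa : Sa ∈ D) (hSb : Sb ∈ D)
    (hh : h ≫ ga⟦(1:ℤ)⟧' = 0) {W : C} {π : E ⟶ W} (huπ : fa ≫ u ≫ π = 0)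
    (hW : ∀ f : Rb ⟶ W, f = 0) : Factors D π := by
  obtain ⟨φ, hφ⟩ : ∃ φ : Sa ⟶ W, u ≫ π = ga ≫ φ := Triangle.yoneda_exact₂ _ hT₁ _ huπ
  obtain ⟨ρ, hρ⟩ : ∃ ρ : E ⟶ Sa, ga = u ≫ ρ := Triangle.yoneda_exact₁ _ hT₃ ga hh
  obtain ⟨d, hd⟩ : ∃ d : A₂ ⟶ W, π - ρ ≫ φ = v ≫ d := Triangle.yoneda_exact₂ _ hT₃ _ (by
    change u ≫ _ = 0
    rw [comp_sub, hφ, hρ, assoc, sub_self])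
  obtain ⟨r, rfl⟩ : ∃ r : Sb ⟶ W, d = gb ≫ r := Triangle.yoneda_exact₂ _ hT₂ d (hW _)
  have hπ : π = ρ ≫ φ + (v ≫ gb) ≫ r := by rw [assoc, ← hd, add_sub_cancel]
  rw [hπ]
  exact Factors.add hD ⟨Sa, ρ, φ, hSa, rfl⟩ ⟨Sb, v ≫ gb, r, hSb, rfl⟩

end TwoRigid

theorem mem_star_of_distTriang {R : Set C} (hR : AddClosed R) (hR₁ : HomZero R (shiftSet R 1))
    (hR₂ : HomZero R (shiftSet R 2)) {A₁ A₂ E : C} (hA₁ : A₁ ∈ star R (shiftSet R 1))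
    (hA₂ : A₂ ∈ star R (shiftSet R 1)) {u : A₁ ⟶ E} {v : E ⟶ A₂} {h : A₂ ⟶ A₁⟦(1:ℤ)⟧}
    (hT₃ : Triangle.mk u v h ∈ distTriang C) : E ∈ star R (shiftSet R 1) := by
  obtain ⟨Ra, Sa, fa, ga, wa, hRa, hSa, hT₁⟩ := id hA₁
  obtain ⟨Rb, Sb, fb, gb, wb, hRb, hSb, hT₂⟩ := id hA₂
  obtain ⟨eb, heb⟩ : ∃ eb : Rb ⟶ E, fb = eb ≫ v :=
    Triangle.coyoneda_exact₃ _ hT₃ fb (homZero_shift_of_mem_star hR₁ hR₂ hA₁ hRb rfl _)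
  have hP : (Ra ⊞ Rb : C) ∈ R := hR.biprod_mem hRa hRb
  obtain ⟨W, π, δ, hT₄⟩ := distinguished_cocone_triangle (biprod.desc (fa ≫ u) eb)
  have hRW : HomZero R {W} := homZero_of_isRightApprox hR₁ hT₄
    (isRightApprox_biprod_desc hR₁ hT₁ hT₂ hT₃ hP hSa hSb heb)
  have hSa₁ : Sa⟦(1:ℤ)⟧ ∈ shiftSet R 2 := by
    rw [← shiftSet_shiftSet R (show (1:ℤ) + 1 = 2 by norm_num)]
    exact mem_shiftSet_shift hSa 1
  have huπ : fa ≫ u ≫ π = 0 := by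
    have hqπ : biprod.desc (fa ≫ u) eb ≫ π = 0 := comp_distTriang_mor_zero₁₂ _ hT₄
    simpa using biprod.inl ≫= hqπ
  have hπ : Factors (shiftSet R 1) π :=
    factors_of_extension (hR.shiftSet 1) hT₁ hT₂ hT₃ hSa hSb
      (homZero_star_shiftSet_two hR₁ hR₂ hA₂ hSa₁ _) huπ (hRW hRb rfl)
  have hPR : HomZero {(Ra ⊞ Rb : C)} (shiftSet R 1) := by
    rintro _ S rfl hS f
    exact hR₁ hP hS f
  exact ⟨_, W, _, π, δ, hP,
    mem_of_distTriang_of_factors (hR.shiftSet 1) hT₄ (mem_shiftSet_shift hP 1) hPR hπ, hT₄⟩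

theorem statement_18_general (R : Set C) (haddR : AddClosed R)
    (h1 : ∀ ⦃A B : C⦄, A ∈ R → B ∈ R → ∀ f : A ⟶ B⟦(1:ℤ)⟧, f = 0)
    (h2 : ∀ ⦃A B : C⦄, A ∈ R → B ∈ R → ∀ f : A ⟶ B⟦(2:ℤ)⟧, f = 0) :
    (∀ (A₁ A₂ E : C), A₁ ∈ star R (shiftSet R 1) → A₂ ∈ star R (shiftSet R 1) →
        ∀ (f : A₁ ⟶ E) (g : E ⟶ A₂) (h : A₂ ⟶ A₁⟦(1:ℤ)⟧),
          (Triangle.mk f g h ∈ distTriang C) → E ∈ star R (shiftSet R 1)) ∧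
    (∀ R₀ ∈ R, ∀ B ∈ star R (shiftSet R 1), ∀ f : R₀ ⟶ B⟦(1:ℤ)⟧, f = 0) ∧
    (∀ A ∈ star R (shiftSet R 1), ∀ R₀ ∈ R, ∀ f : A ⟶ R₀⟦(2:ℤ)⟧, f = 0) ∧
    (∀ A B : C, A ∈ star R (shiftSet R 1) → B ∈ star R (shiftSet R 1) →
        ∀ f : A ⟶ B⟦(1:ℤ)⟧, Factors (shiftSet R 1) f) ∧
    (∀ X : Set C, X ⊆ star R (shiftSet R 1) → (RelRigid R X X ↔ Rigid X)) := by
  have hR₁ : HomZero R (shiftSet R 1) := homZero_shiftSet_of_forall h1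
  have hR₂ : HomZero R (shiftSet R 2) := homZero_shiftSet_of_forall h2
  have hfac : ∀ A B : C, A ∈ star R (shiftSet R 1) → B ∈ star R (shiftSet R 1) →
      ∀ f : A ⟶ B⟦(1:ℤ)⟧, Factors (shiftSet R 1) f :=
    fun _ _ hA hB f => factors_of_mem_star hA f (homZero_shift_of_mem_star hR₁ hR₂ hB)
  refine ⟨fun _ _ _ hA₁ hA₂ _ _ _ hT => mem_star_of_distTriang haddR hR₁ hR₂ hA₁ hA₂ hT,
    fun _ hR₀ _ hB f => homZero_shift_of_mem_star hR₁ hR₂ hB hR₀ rfl f,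
    fun _ hA _ hR₀ f => homZero_star_shiftSet_two hR₁ hR₂ hA (mem_shiftSet_shift hR₀ 2) f,
    hfac, fun X hX => ⟨?_, ?_⟩⟩
  · exact fun hrel A B hA hB f => hrel hA hB f (hfac A B (hX hA) (hX hB) f)
  · exact fun hrig A B hA hB f _ => hrig hA hB f

theorem statement_18 (hKS : KrullSchmidtCat C) (R : Set C) (haddR : AddClosed R)
    (h1 : ∀ ⦃A B : C⦄, A ∈ R → B ∈ R → ∀ f : A ⟶ B⟦(1:ℤ)⟧, f = 0)
    (h2 : ∀ ⦃A B : C⦄, A ∈ R → B ∈ R → ∀ f : A ⟶ B⟦(2:ℤ)⟧, f = 0) :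
    (∀ (A₁ A₂ E : C), A₁ ∈ star R (shiftSet R 1) → A₂ ∈ star R (shiftSet R 1) →
        ∀ (f : A₁ ⟶ E) (g : E ⟶ A₂) (h : A₂ ⟶ A₁⟦(1:ℤ)⟧),
          (Triangle.mk f g h ∈ distTriang C) → E ∈ star R (shiftSet R 1)) ∧
    (∀ R₀ ∈ R, ∀ B ∈ star R (shiftSet R 1), ∀ f : R₀ ⟶ B⟦(1:ℤ)⟧, f = 0) ∧
    (∀ A ∈ star R (shiftSet R 1), ∀ R₀ ∈ R, ∀ f : A ⟶ R₀⟦(2:ℤ)⟧, f = 0) ∧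
    (∀ A B : C, A ∈ star R (shiftSet R 1) → B ∈ star R (shiftSet R 1) →
        ∀ f : A ⟶ B⟦(1:ℤ)⟧, Factors (shiftSet R 1) f) ∧
    (∀ X : Set C, X ⊆ star R (shiftSet R 1) → (RelRigid R X X ↔ Rigid X)) :=
  statement_18_general R haddR h1 h2

end RelCT
end
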